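/- arXiv:2405.08108 — 2 statements merged into one kernel-verified Lean document; each statement's English description precedes it below -/
import Mathlib

section
/- A finitely generated submonoid Γ of (ℤ_{≥0})^m is a free commutative monoid (i.e., isomorphic to (ℤ_{≥0})^k for some k) if and only if the set of irreducible elements of Γ is linearly independent over ℚ. -/
/-- An element of an additive submonoid is irreducible if it is nonzero and cannot
be written as a sum of two nonzero elements of the submonoid. -/
def IsIrredElem {M : Type*} [AddCommMonoid M] (Γ : AddSubmonoid M) (x : M) : Prop :=
  x ∈ Γ ∧ x ≠ 0 ∧ ∀ a b : M, a ∈ Γ → b ∈ Γ → x = a + b → a = 0 ∨ b = 0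

/-- An "irreducible" element of `ℕ^k` is a unit basis vector. -/
lemma pi_nat_irred {k : ℕ} {y : Fin k → ℕ} (h0 : y ≠ 0)
    (h : ∀ a b : Fin k → ℕ, y = a + b → a = 0 ∨ b = 0) :
    ∃ j, y = Pi.single j 1 := by
  classical
  obtain ⟨j, hj⟩ : ∃ j, y j ≠ 0 := by
    by_contra hc; push_neg at hc; exact h0 (funext fun j => hc j)
  have hsplit : y = Pi.single j (y j) + fun i => if i = j then 0 else y i := by
    funext i
    by_cases hij : i = j <;> simp [hij, Pi.single_apply]
  rcases h _ _ hsplit with h1 | h2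
  · exact absurd (by simpa using congrFun h1 j) hj
  · have hrest : ∀ i, i ≠ j → y i = 0 := fun i hij => by
      have := congrFun h2 i; simpa [hij] using this
    have hy : y = Pi.single j (y j) := by
      funext i
      by_cases hij : i = j
      · subst hij; simp
      · simp [Pi.single_apply, hij, hrest i hij]
    rcases Nat.exists_eq_succ_of_ne_zero hj with ⟨n, hn⟩
    have hsingle : y = Pi.single j 1 + Pi.single j n := by
      rw [hy, hn]; funext i
      by_cases hij : i = j
      · subst hij; simp only [Pi.single_eq_same, Pi.add_apply]; omega
      · simp [Pi.single_apply, hij]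
    rcases h _ _ hsingle with h1 | h2
    · have := congrFun h1 j; simp at this
    · have hn0 : n = 0 := by simpa using congrFun h2 j
      exact ⟨j, by rw [hy, hn, hn0]⟩

/-- Coercion of a finite sum of natural multiples out of an additive submonoid. -/
lemma coe_sum_nsmul {M : Type*} [AddCommMonoid M] (Γ : AddSubmonoid M) {α : Type*}
    (t : Finset α) (f : α → ℕ) (g : α → Γ) :
    ((∑ j ∈ t, f j • g j : Γ) : M) = ∑ j ∈ t, f j • (g j : M) := by
  calc ((∑ j ∈ t, f j • g j : Γ) : M) = Γ.subtype (∑ j ∈ t, f j • g j) := rfl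
    _ = ∑ j ∈ t, f j • (g j : M) := by
        rw [map_sum]
        exact Finset.sum_congr rfl fun j _ => map_nsmul Γ.subtype _ _

/-- A finitely generated submonoid `Γ` of `(ℤ≥0)^m` is a free commutative monoid
(i.e. isomorphic to `(ℤ≥0)^k` for some `k`) iff the set of irreducible elements of `Γ`
is linearly independent over `ℚ`. -/
theorem stmt0 (m : ℕ) (Γ : AddSubmonoid (Fin m → ℤ))
    (hΓfg : Γ.FG) (hpos : ∀ x ∈ Γ, ∀ i, 0 ≤ x i) :
    (∃ k : ℕ, Nonempty (Γ ≃+ (Fin k → ℕ))) ↔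
      LinearIndependent ℚ
        (fun x : {x : Fin m → ℤ // IsIrredElem Γ x} => fun i => ((x.1 i : ℚ))) := by
  classical
  set v : {x : Fin m → ℤ // IsIrredElem Γ x} → (Fin m → ℚ) :=
    fun x => fun i => ((x.1 i : ℚ)) with hvdef
  let c : (Fin m → ℤ) →+ (Fin m → ℚ) := (Int.castAddHom ℚ).compLeft (Fin m)
  have hc : Function.Injective c := by
    intro x y hxy
    funext i
    have h1 := congrFun hxy i
    exact Int.cast_injective (α := ℚ) h1
  have hvc : ∀ x : {x : Fin m → ℤ // IsIrredElem Γ x}, v x = c x.1 := fun x => rfl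
  let el : {x : Fin m → ℤ // IsIrredElem Γ x} → Γ := fun x => ⟨x.1, x.2.1⟩
  rw [← LinearIndependent.iff_fractionRing ℤ ℚ]
  constructor
  · rintro ⟨k, ⟨e⟩⟩
    rw [linearIndependent_iff']
    intro s g hsum i hi
    -- each irreducible maps to a unit basis vector under e
    have hw : ∀ x : {x : Fin m → ℤ // IsIrredElem Γ x}, ∃ j, (e (el x) : Fin k → ℕ) = Pi.single j 1 := by
      intro x
      apply pi_nat_irred
      · intro h0
        apply x.2.2.1
        have h1 : el x = 0 := e.injective (by simpa using h0)
        simpa [el, Subtype.ext_iff] using h1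
      · intro a b hab
        have h1 : el x = e.symm a + e.symm b := by
          apply e.injective; simp [hab]
        have h2 : x.1 = ((e.symm a : Γ) : Fin m → ℤ) + ((e.symm b : Γ) : Fin m → ℤ) := by
          have h2 := congrArg (Subtype.val) h1
          simpa [AddSubmonoid.coe_add] using h2
        rcases x.2.2.2 _ _ (e.symm a).2 (e.symm b).2 h2 with h | h
        · left
          have h3 : e.symm a = 0 := Subtype.ext h
          calc a = e (e.symm a) := (e.apply_symm_apply a).symm
            _ = 0 := by rw [h3, map_zero]
        · right
          have h3 : e.symm b = 0 := Subtype.ext h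
          calc b = e (e.symm b) := (e.apply_symm_apply b).symm
            _ = 0 := by rw [h3, map_zero]
    choose σ hσ using hw
    have hσinj : Function.Injective σ := by
      intro x y hxy
      have h1 : e (el x) = e (el y) := by rw [hσ x, hσ y, hxy]
      have h2 := e.injective h1
      exact Subtype.ext (by simpa [el, Subtype.ext_iff] using h2)
    -- integer relation in ℤ^m
    have hrel : ∑ j ∈ s, g j • (j : {x : Fin m → ℤ // IsIrredElem Γ x}).1 = 0 := by
      apply hc
      rw [map_sum, map_zero, ← hsum]
      refine Finset.sum_congr rfl fun j hj => ?_
      rw [map_zsmul, hvc]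
    set a : {x : Fin m → ℤ // IsIrredElem Γ x} → ℕ := fun j => (g j).toNat with ha
    set b : {x : Fin m → ℤ // IsIrredElem Γ x} → ℕ := fun j => (-g j).toNat with hb
    have hab : ∀ j, (a j : ℤ) - (b j : ℤ) = g j := by
      intro j; simp only [ha, hb]; omega
    have hsum2 : ∑ j ∈ s, a j • (j : {x : Fin m → ℤ // IsIrredElem Γ x}).1 = ∑ j ∈ s, b j • (j : {x : Fin m → ℤ // IsIrredElem Γ x}).1 := by
      have h1 : ∑ j ∈ s, ((a j : ℤ) • (j : {x : Fin m → ℤ // IsIrredElem Γ x}).1 - (b j : ℤ) • (j : {x : Fin m → ℤ // IsIrredElem Γ x}).1) = 0 := by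
        rw [← hrel]
        refine Finset.sum_congr rfl fun j hj => ?_
        rw [← sub_smul, hab]
      rw [Finset.sum_sub_distrib] at h1
      have h2 := sub_eq_zero.mp h1
      simpa [natCast_zsmul] using h2
    -- lift to Γ
    have hAB : (∑ j ∈ s, a j • el j) = (∑ j ∈ s, b j • el j) := by
      apply Subtype.coe_injective
      show ((∑ j ∈ s, a j • el j : Γ) : Fin m → ℤ) = ((∑ j ∈ s, b j • el j : Γ) : Fin m → ℤ)
      rw [coe_sum_nsmul, coe_sum_nsmul]
      exact hsum2
    -- apply e
    have he : ∑ j ∈ s, a j • (Pi.single (σ j) 1 : Fin k → ℕ)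
        = ∑ j ∈ s, b j • (Pi.single (σ j) 1 : Fin k → ℕ) := by
      have h1 := congrArg e hAB
      rw [map_sum, map_sum] at h1
      simpa [map_nsmul, hσ] using h1
    have heval : ∀ f : {x : Fin m → ℤ // IsIrredElem Γ x} → ℕ,
        (∑ j ∈ s, f j • (Pi.single (σ j) 1 : Fin k → ℕ)) (σ i) = f i := by
      intro f
      rw [Finset.sum_apply]
      rw [Finset.sum_eq_single i]
      · simp
      · intro j hj hne
        have hne' : σ i ≠ σ j := fun h => hne (hσinj h).symm
        simp [Pi.single_apply, hne']
      · intro h; exact absurd hi h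
    have hai : a i = b i := by
      have h1 := congrFun he (σ i)
      rwa [heval a, heval b] at h1
    rw [← hab i, hai, sub_self]
  · intro hli
    have hliQ : LinearIndependent ℚ v := (LinearIndependent.iff_fractionRing ℤ ℚ).mp hli
    have hfin : Finite {x : Fin m → ℤ // IsIrredElem Γ x} := hliQ.finite
    have hft : Fintype {x : Fin m → ℤ // IsIrredElem Γ x} := Fintype.ofFinite _
    set k := Fintype.card {x : Fin m → ℤ // IsIrredElem Γ x} with hk
    let σ : Fin k ≃ {x : Fin m → ℤ // IsIrredElem Γ x} :=
      (Fintype.equivFin {x : Fin m → ℤ // IsIrredElem Γ x}).symm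
    -- atomicity : every element of Γ is a sum of irreducibles
    have hatom : ∀ x ∈ Γ, x ∈ AddSubmonoid.closure {y | IsIrredElem Γ y} := by
      have key : ∀ n : ℕ, ∀ x ∈ Γ, (∑ i, x i) ≤ (n : ℤ) →
          x ∈ AddSubmonoid.closure {y | IsIrredElem Γ y} := by
        intro n
        induction n with
        | zero =>
          intro x hx hle
          have hx0 : x = 0 := by
            funext i
            have h1 : ∑ i, x i = 0 :=
              le_antisymm (by exact_mod_cast hle)
                (Finset.sum_nonneg fun i _ => hpos x hx i)
            exact (Finset.sum_eq_zero_iff_of_nonneg fun i _ =>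
              hpos x hx i).mp h1 i (Finset.mem_univ i)
          rw [hx0]; exact zero_mem _
        | succ n ih =>
          intro x hx hle
          by_cases h0 : x = 0
          · rw [h0]; exact zero_mem _
          by_cases hirr : IsIrredElem Γ x
          · exact AddSubmonoid.subset_closure hirr
          · have hdec : ∃ p q : Fin m → ℤ, p ∈ Γ ∧ q ∈ Γ ∧ x = p + q ∧ p ≠ 0 ∧ q ≠ 0 := by
              by_contra hcon
              push_neg at hcon
              exact hirr ⟨hx, h0, fun p q hp hq hpq => by
                by_contra hc2; push_neg at hc2
                exact hc2.2 (hcon p q hp hq hpq hc2.1)⟩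
            obtain ⟨p, q, hp, hq, hpq, hp0, hq0⟩ := hdec
            have hsumpos : ∀ z : Fin m → ℤ, z ∈ Γ → z ≠ 0 → 1 ≤ ∑ i, z i := by
              intro z hz hz0
              have hpos' : 0 < ∑ i, z i := by
                apply Finset.sum_pos' (fun i _ => hpos z hz i)
                obtain ⟨i, hi⟩ : ∃ i, z i ≠ 0 := by
                  by_contra hcc; push_neg at hcc; exact hz0 (funext hcc)
                exact ⟨i, Finset.mem_univ i, lt_of_le_of_ne (hpos z hz i) (Ne.symm hi)⟩
              omega
            have hp1 := hsumpos p hp hp0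
            have hq1 := hsumpos q hq hq0
            have hsplit : ∑ i, x i = ∑ i, p i + ∑ i, q i := by
              rw [hpq]; exact Finset.sum_add_distrib
            push_cast at hle
            have hple : ∑ i, p i ≤ (n : ℤ) := by omega
            have hqle : ∑ i, q i ≤ (n : ℤ) := by omega
            rw [hpq]
            exact add_mem (ih p hp hple) (ih q hq hqle)
      intro x hx
      exact key (∑ i, x i).toNat x hx (Int.self_le_toNat _)
    -- the candidate isomorphism
    let Φ : (Fin k → ℕ) → Γ := fun n => ∑ j, n j • el (σ j)
    let ψ : (Fin k → ℕ) →+ Γ :=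
      { toFun := Φ
        map_zero' := by simp [Φ]
        map_add' := fun n n' => by
          simp [Φ, add_smul, Finset.sum_add_distrib] }
    have hψ : ∀ n, ψ n = Φ n := fun _ => rfl
    have hΦsingle : ∀ j0 : Fin k, Φ (Pi.single j0 1) = el (σ j0) := by
      intro j0
      show ∑ j, (Pi.single j0 1 : Fin k → ℕ) j • el (σ j) = el (σ j0)
      rw [Finset.sum_eq_single j0]
      · simp
      · intro j _ hne
        simp [Pi.single_eq_of_ne hne]
      · intro h; exact absurd (Finset.mem_univ j0) h
    have hinj : Function.Injective ψ := by
      intro n n' h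
      have h0 : ((Φ n : Γ) : Fin m → ℤ) = ((Φ n' : Γ) : Fin m → ℤ) := by
        rw [← hψ, ← hψ, h]
      rw [show ((Φ n : Γ) : Fin m → ℤ) = ((∑ j, n j • el (σ j) : Γ) : Fin m → ℤ) from rfl,
        show ((Φ n' : Γ) : Fin m → ℤ) = ((∑ j, n' j • el (σ j) : Γ) : Fin m → ℤ) from rfl,
        coe_sum_nsmul, coe_sum_nsmul] at h0
      have h1 := congrArg c h0
      rw [map_sum, map_sum] at h1
      simp only [map_nsmul] at h1
      have hLI := Fintype.linearIndependent_iff.mp (hli.comp σ σ.injective)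
      have hz : ∑ j, ((n j : ℤ) - (n' j : ℤ)) • (v ∘ σ) j = 0 := by
        simp only [sub_smul, Finset.sum_sub_distrib]
        rw [sub_eq_zero]
        have h2 : ∀ (f : Fin k → ℕ),
            ∑ j, f j • c ((el (σ j) : Fin m → ℤ)) = ∑ j, ((f j : ℤ)) • (v ∘ σ) j := by
          intro f
          refine Finset.sum_congr rfl fun j _ => ?_
          rw [natCast_zsmul]
          rfl
        rw [← h2 n, ← h2 n', h1]
      have h3 := hLI _ hz
      funext j
      have h4 := h3 j
      omega
    have hsurj : Function.Surjective ψ := by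
      rintro ⟨x, hx⟩
      have hsub : {y | IsIrredElem Γ y} ⊆
          ((AddMonoidHom.mrange ψ).map Γ.subtype : AddSubmonoid (Fin m → ℤ)) := by
        intro y hy
        refine ⟨el ⟨y, hy⟩, ⟨Pi.single (σ.symm ⟨y, hy⟩) 1, ?_⟩, rfl⟩
        rw [hψ, hΦsingle, Equiv.apply_symm_apply]
      have hmem : x ∈ ((AddMonoidHom.mrange ψ).map Γ.subtype : AddSubmonoid (Fin m → ℤ)) :=
        AddSubmonoid.closure_le.mpr hsub (hatom x hx)
      obtain ⟨z, hz1, hz2⟩ := hmem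
      obtain ⟨nvec, hn⟩ := hz1
      exact ⟨nvec, by rw [hn]; exact Subtype.ext hz2⟩
    exact ⟨k, ⟨(AddEquiv.ofBijective ψ ⟨hinj, hsurj⟩).symm⟩⟩
end

section
/- Let S be a finite set and d : S → ℤ^k a function with values in (ℤ_{≥0})^k. Call a subset A ⊆ S basic if for every ρ ∈ A, d(ρ) does not lie in the submonoid generated by {d(ρ') : ρ' ∈ A \ {ρ}}. Then for every subset B ⊆ S there exists a basic subset A ⊆ B such that the submonoid generated by {d(ρ) : ρ ∈ A} equals the submonoid generated by {d(ρ) : ρ ∈ B}. -/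
/-- A subset `A` is basic (for `d : S → ℤ^k`) if no `d ρ` with `ρ ∈ A` lies in the
submonoid generated by the values of `d` on `A \ {ρ}`. -/
def IsBasicSubset {S : Type*} {k : ℕ} (d : S → (Fin k → ℤ)) (A : Set S) : Prop :=
  ∀ ρ ∈ A, d ρ ∉ AddSubmonoid.closure (d '' (A \ {ρ}))

lemma closure_insert_of_mem {M : Type*} [AddCommMonoid M] {x : M} {s : Set M}
    (hx : x ∈ AddSubmonoid.closure s) :
    AddSubmonoid.closure (insert x s) = AddSubmonoid.closure s := by
  refine le_antisymm ?_ (AddSubmonoid.closure_mono (Set.subset_insert _ _))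
  rw [AddSubmonoid.closure_le]
  rintro y (rfl | hy)
  · exact hx
  · exact AddSubmonoid.subset_closure hy

/-- For every subset `B` of a finite set `S` there is a basic subset `A ⊆ B` generating
the same submonoid of `ℤ^k`. -/
theorem stmt5 {S : Type*} [Fintype S] (k : ℕ) (d : S → (Fin k → ℤ))
    (hnn : ∀ ρ l, 0 ≤ d ρ l) (B : Set S) :
    ∃ A ⊆ B, IsBasicSubset d A ∧
      AddSubmonoid.closure (d '' A) = AddSubmonoid.closure (d '' B) := by
  have hfin : B.Finite := Set.toFinite B
  generalize hn : B.ncard = n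
  induction n using Nat.strong_induction_on generalizing B with
  | _ n ih =>
    by_cases hbasic : IsBasicSubset d B
    · exact ⟨B, le_refl _, hbasic, rfl⟩
    · simp only [IsBasicSubset, not_forall] at hbasic
      obtain ⟨ρ, hρB, hρmem⟩ := hbasic
      rw [not_not] at hρmem
      have hlt : (B \ {ρ}).ncard < n := by
        subst hn
        exact Set.ncard_diff_singleton_lt_of_mem hρB hfin
      obtain ⟨A, hAsub, hAbasic, hAcl⟩ :=
        ih _ hlt (B \ {ρ}) (hfin.subset Set.diff_subset) rfl
      refine ⟨A, hAsub.trans Set.diff_subset, hAbasic, ?_⟩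
      rw [hAcl]
      have hB : B = insert ρ (B \ {ρ}) := by
        rw [Set.insert_diff_singleton, Set.insert_eq_of_mem hρB]
      conv_rhs => rw [hB]
      rw [Set.image_insert_eq, closure_insert_of_mem hρmem]
end
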